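/- Let X be a finite set with |X| ≥ 2 and let H be a hierarchy on X. Then the adjoint H* equals the union of all hierarchies on X that contain H, and also equals the union of all maximal hierarchies on X that contain H; in particular, H* contains at least one maximal hierarchy on X. -/

import Mathlib

/-!
A non-empty set `A` lies in `H*` exactly when `insert A H` is again a hierarchy, and every
hierarchy containing `H` lies inside `H*`. Extending `insert A H` to a maximal hierarchy by
Zorn's lemma gives the second equality, and extending `H` itself gives the maximal hierarchy inside `H*`.
-/

/-- Two subsets `A`, `B` are compatible if `A ∩ B ∈ {∅, A, B}`. -/
def Compatible {α : Type*} [DecidableEq α] (A B : Finset α) : Prop :=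
  A ∩ B = ∅ ∨ A ∩ B = A ∨ A ∩ B = B

/-- A cluster system: a collection of non-empty subsets of `X`. -/
def IsCS {α : Type*} [DecidableEq α] (C : Set (Finset α)) : Prop :=
  ∀ A ∈ C, A.Nonempty

/-- The adjoint `C*`: all non-empty subsets of `X` compatible with every member of `C`. -/
def adjS {α : Type*} [DecidableEq α] (C : Set (Finset α)) : Set (Finset α) :=
  {A | A.Nonempty ∧ ∀ B ∈ C, Compatible A B}

/-- A hierarchy: a cluster system whose members are pairwise compatible. -/
def IsHierarchyS {α : Type*} [DecidableEq α] (C : Set (Finset α)) : Prop :=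
  IsCS C ∧ ∀ A ∈ C, ∀ B ∈ C, Compatible A B

/-- A maximal hierarchy: a hierarchy not properly contained in any other hierarchy. -/
def IsMaxHierarchyS {α : Type*} [DecidableEq α] (H : Set (Finset α)) : Prop :=
  IsHierarchyS H ∧ ∀ D : Set (Finset α), IsHierarchyS D → H ⊆ D → D = H

/-- A weak patchwork: incompatible members have their union in the system. -/
def IsWeakPW {α : Type*} [DecidableEq α] (C : Set (Finset α)) : Prop :=
  ∀ A ∈ C, ∀ B ∈ C, ¬Compatible A B → A ∪ B ∈ C

/-- A patchwork: incompatible members have both intersection and union in the system. -/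
def IsPW {α : Type*} [DecidableEq α] (C : Set (Finset α)) : Prop :=
  ∀ A ∈ C, ∀ B ∈ C, ¬Compatible A B → A ∩ B ∈ C ∧ A ∪ B ∈ C

/-- A saturated patchwork: for incompatible members `A`, `B`, the five sets
`A ∩ B`, `A ∪ B`, `A - B`, `B - A`, `(A ∪ B) - (A ∩ B)` lie in the system. -/
def IsSatPW {α : Type*} [DecidableEq α] (C : Set (Finset α)) : Prop :=
  ∀ A ∈ C, ∀ B ∈ C, ¬Compatible A B →
    A ∩ B ∈ C ∧ A ∪ B ∈ C ∧ A \ B ∈ C ∧ B \ A ∈ C ∧ (A ∪ B) \ (A ∩ B) ∈ C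

/-- The trivial cluster system: all singletons together with `X` itself. -/
def CtrivS (α : Type*) [Fintype α] [DecidableEq α] : Set (Finset α) :=
  {A | (∃ x : α, A = {x}) ∨ A = Finset.univ}

/-- `C` is ample: for every arc `(C₂, C₁)` of the Hasse diagram (i.e. `C₂ ⊊ C₁`
with nothing of `C` strictly between), `C₁ - C₂ ∈ C`. -/
def IsAmpleS {α : Type*} [DecidableEq α] (C : Set (Finset α)) : Prop :=
  ∀ C₁ ∈ C, ∀ C₂ ∈ C, C₂ ⊂ C₁ → (∀ B ∈ C, ¬(C₂ ⊂ B ∧ B ⊂ C₁)) → C₁ \ C₂ ∈ C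

section

variable {α : Type*} [DecidableEq α]

theorem Compatible.symm {A B : Finset α} (h : Compatible A B) : Compatible B A := by
  unfold Compatible at *
  rw [Finset.inter_comm] at h
  tauto

theorem compatible_self (A : Finset α) : Compatible A A :=
  Or.inr (Or.inl (Finset.inter_self A))

namespace IsHierarchyS

variable {H D : Set (Finset α)}

theorem subset_adjS (hD : IsHierarchyS D) (hHD : H ⊆ D) : D ⊆ adjS H :=
  fun A hA => ⟨hD.1 A hA, fun B hB => hD.2 A hA B (hHD hB)⟩

theorem insert_of_mem_adjS (hH : IsHierarchyS H) {A : Finset α} (hA : A ∈ adjS H) :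
    IsHierarchyS (insert A H) := by
  obtain ⟨hne, hcomp⟩ := hA
  refine ⟨?_, ?_⟩
  · rintro B (rfl | hB)
    exacts [hne, hH.1 B hB]
  · rintro B (rfl | hB) C (rfl | hC)
    exacts [compatible_self _, hcomp C hC, (hcomp B hB).symm, hH.2 B hB C hC]

theorem sUnion_of_isChain {c : Set (Set (Finset α))} (hc : ∀ D ∈ c, IsHierarchyS D)
    (hchain : IsChain (· ⊆ ·) c) : IsHierarchyS (⋃₀ c) := by
  refine ⟨?_, ?_⟩
  · rintro A ⟨D, hD, hAD⟩
    exact (hc D hD).1 A hAD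
  · rintro A ⟨D, hD, hAD⟩ B ⟨E, hE, hBE⟩
    rcases hchain.total hD hE with hDE | hED
    · exact (hc E hE).2 A (hDE hAD) B hBE
    · exact (hc D hD).2 A hAD B (hED hBE)

theorem exists_isMaxHierarchyS_superset (hD : IsHierarchyS D) :
    ∃ M, IsMaxHierarchyS M ∧ D ⊆ M := by
  obtain ⟨M, hDM, hM, hMmax⟩ := zorn_subset_nonempty {E : Set (Finset α) | IsHierarchyS E}
    (fun c hc hchain _ => ⟨⋃₀ c, sUnion_of_isChain hc hchain, fun _ => Set.subset_sUnion_of_mem⟩)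
    D hD
  exact ⟨M, ⟨hM, fun E hE hME => (hMmax hE hME).antisymm hME⟩, hDM⟩

end IsHierarchyS

variable {H : Set (Finset α)}

theorem sUnion_superset_subset_adjS {P : Set (Finset α) → Prop}
    (hP : ∀ D, P D → IsHierarchyS D) : ⋃₀ {D | P D ∧ H ⊆ D} ⊆ adjS H := by
  rintro A ⟨D, ⟨hD, hHD⟩, hAD⟩
  exact (hP D hD).subset_adjS hHD hAD

theorem adjS_eq_sUnion_isHierarchyS_superset (hH : IsHierarchyS H) :
    adjS H = ⋃₀ {D | IsHierarchyS D ∧ H ⊆ D} := by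
  refine Set.Subset.antisymm (fun A hA => ?_) (sUnion_superset_subset_adjS fun _ => id)
  exact ⟨insert A H, ⟨hH.insert_of_mem_adjS hA, Set.subset_insert _ _⟩, Set.mem_insert _ _⟩

theorem adjS_eq_sUnion_isMaxHierarchyS_superset (hH : IsHierarchyS H) :
    adjS H = ⋃₀ {D | IsMaxHierarchyS D ∧ H ⊆ D} := by
  refine Set.Subset.antisymm (fun A hA => ?_) (sUnion_superset_subset_adjS fun _ => And.left)
  obtain ⟨M, hM, hAHM⟩ := (hH.insert_of_mem_adjS hA).exists_isMaxHierarchyS_superset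
  exact ⟨M, ⟨hM, (Set.subset_insert _ _).trans hAHM⟩, hAHM (Set.mem_insert _ _)⟩

end

theorem stmt2_general {α : Type*} [DecidableEq α]
    (H : Set (Finset α)) (hH : IsHierarchyS H) :
    adjS H = ⋃₀ {D : Set (Finset α) | IsHierarchyS D ∧ H ⊆ D} ∧
    adjS H = ⋃₀ {D : Set (Finset α) | IsMaxHierarchyS D ∧ H ⊆ D} ∧
    ∃ M : Set (Finset α), IsMaxHierarchyS M ∧ M ⊆ adjS H := by
  obtain ⟨M, hM, hHM⟩ := hH.exists_isMaxHierarchyS_superset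
  exact ⟨adjS_eq_sUnion_isHierarchyS_superset hH, adjS_eq_sUnion_isMaxHierarchyS_superset hH,
    M, hM, hM.1.subset_adjS hHM⟩

/-- For a hierarchy `H`, the adjoint `H*` is the union of all hierarchies containing `H`,
and also the union of all maximal hierarchies containing `H`; in particular `H*`
contains a maximal hierarchy. -/
theorem stmt2 {α : Type*} [Fintype α] [DecidableEq α] (hcard : 2 ≤ Fintype.card α)
    (H : Set (Finset α)) (hH : IsHierarchyS H) :
    adjS H = ⋃₀ {D : Set (Finset α) | IsHierarchyS D ∧ H ⊆ D} ∧
    adjS H = ⋃₀ {D : Set (Finset α) | IsMaxHierarchyS D ∧ H ⊆ D} ∧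
    ∃ M : Set (Finset α), IsMaxHierarchyS M ∧ M ⊆ adjS H :=
  stmt2_general H hH
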